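/- Let A be the m×m tridiagonal matrix described in the context. Then A is invertible and the entries of its inverse satisfy |（A⁻¹)_{ij}| ≤ (2/3)·2^{−|i−j|} for all 1 ≤ i, j ≤ m. -/

import Mathlib

/-- The `(m+1) × (m+1)` tridiagonal matrix with diagonal entries `2`,
superdiagonal entries `A i (i+1) = μ i` and subdiagonal entries
`A (i+1) i = λ (i+1)`. -/
noncomputable def splineMatrix (m : ℕ) (lam mu : Fin (m + 1) → ℝ) :
    Matrix (Fin (m + 1)) (Fin (m + 1)) ℝ := fun i j =>
  if (j : ℕ) = (i : ℕ) + 1 then mu i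
  else if (i : ℕ) = (j : ℕ) + 1 then lam i
  else if i = j then 2 else 0

/-!
Write `A = 2 (1 - J)`: the Jacobi matrix `J` has zero diagonal, lives on the two
neighbouring off-diagonals, and has absolute row sums `(λᵢ + μᵢ)/2 = 1/2`. Hence
`A⁻¹ = ½ ∑ₖ Jᵏ` (Neumann series), `|(Jᵏ)ᵢⱼ| ≤ 2⁻ᵏ`, and `(Jᵏ)ᵢⱼ` vanishes unless
`k = |i - j| + 2t`, since it is a sum over walks of `k` unit steps from `i` to `j`.
Summing `2^{-(d+2t)}` over `t` gives `(4/3) 2^{-d}`, and the factor `½` turns this into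
`(2/3) 2^{-d}`.
-/

open Finset

theorem abs_tsum_le_pow_div_one_sub_sq {f : ℕ → ℝ} {r : ℝ} (hr₀ : 0 ≤ r) (hr₁ : r < 1)
    (hf : ∀ n, |f n| ≤ r ^ n) {d : ℕ} (hsupp : ∀ n, f n ≠ 0 → ∃ t, n = d + 2 * t) :
    |∑' n, f n| ≤ r ^ d / (1 - r ^ 2) := by
  have hinj : Function.Injective fun t : ℕ => d + 2 * t := fun a b h => by
    simp only at h; omega
  rw [← hinj.tsum_eq fun n hn => by simpa [eq_comm] using hsupp n hn]
  have hgeom : HasSum (fun t : ℕ => r ^ d * (r ^ 2) ^ t) (r ^ d / (1 - r ^ 2)) := by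
    simpa [div_eq_mul_inv] using
      (hasSum_geometric_of_lt_one (by positivity) (by nlinarith)).mul_left (r ^ d)
  refine tsum_of_norm_bounded (f := fun t => f (d + 2 * t)) hgeom fun t => ?_
  simpa [Real.norm_eq_abs, pow_add, pow_mul] using hf (d + 2 * t)

theorem Finset.sum_ite_le_of_subsingleton {ι : Type*} [Fintype ι] {p : ι → Prop}
    [DecidablePred p] (hp : {l | p l}.Subsingleton) {c : ℝ} (hc : 0 ≤ c) :
    ∑ l, (if p l then c else 0) ≤ c := by
  rw [sum_ite, sum_const_zero, add_zero, sum_const, nsmul_eq_mul]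
  refine mul_le_of_le_one_left hc ?_
  exact_mod_cast card_le_one.2 fun a ha b hb => hp (mem_filter.1 ha).2 (mem_filter.1 hb).2

namespace Matrix

variable {n : Type*} [Fintype n]

theorem abs_pow_apply_le_of_sum_abs_le [DecidableEq n] {B : Matrix n n ℝ} {r : ℝ}
    (hB : ∀ i, ∑ l, |B i l| ≤ r) (k : ℕ) (i j : n) : |(B ^ k) i j| ≤ r ^ k := by
  induction k generalizing i with
  | zero => by_cases h : i = j <;> simp [h]
  | succ k ih =>
    calc |(B ^ (k + 1)) i j| = |∑ l, B i l * (B ^ k) l j| := by rw [pow_succ', mul_apply]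
      _ ≤ ∑ l, |B i l| * r ^ k := by
        refine (abs_sum_le_sum_abs _ _).trans (sum_le_sum fun l _ => ?_)
        rw [abs_mul]
        exact mul_le_mul_of_nonneg_left (ih l) (abs_nonneg _)
      _ = (∑ l, |B i l|) * r ^ k := (sum_mul _ _ _).symm
      _ ≤ r * r ^ k := by
        have hr : 0 ≤ r := (sum_nonneg fun l _ => abs_nonneg (B i l)).trans (hB i)
        gcongr
        exact hB i
      _ = r ^ (k + 1) := (pow_succ' r k).symm

theorem exists_eq_natAbs_add_two_mul_of_pow_apply_ne_zero {R : Type*} [Semiring R] {m : ℕ}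
    {B : Matrix (Fin m) (Fin m) R} (hB : ∀ i l, B i l ≠ 0 → ((i : ℤ) - l).natAbs = 1)
    (k : ℕ) (i j : Fin m) (h : (B ^ k) i j ≠ 0) :
    ∃ t, k = ((i : ℤ) - j).natAbs + 2 * t := by
  induction k generalizing i with
  | zero =>
    obtain rfl : i = j := by by_contra hij; simp [hij] at h
    exact ⟨0, by simp⟩
  | succ k ih =>
    rw [pow_succ', mul_apply] at h
    obtain ⟨l, -, hl⟩ := exists_ne_zero_of_sum_ne_zero h
    have hil := hB i l (left_ne_zero_of_mul hl)
    obtain ⟨t, ht⟩ := ih l (right_ne_zero_of_mul hl)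
    exact ⟨(k + 1 - ((i : ℤ) - j).natAbs) / 2, by omega⟩

section LinftyOpNorm

attribute [local instance] Matrix.linftyOpNormedAddCommGroup Matrix.linftyOpNormedRing
  Matrix.linftyOpNormedAlgebra

theorem linfty_opNorm_le_of_sum_abs_le {B : Matrix n n ℝ} {r : ℝ} (hr : 0 ≤ r)
    (hB : ∀ i, ∑ l, |B i l| ≤ r) : ‖B‖ ≤ r := by
  rw [linfty_opNorm_def, ← NNReal.coe_mk r hr, NNReal.coe_le_coe]
  refine Finset.sup_le fun i _ => ?_
  rw [← NNReal.coe_le_coe]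
  simpa [Real.norm_eq_abs] using hB i

variable [DecidableEq n] {B : Matrix n n ℝ} {r : ℝ}

theorem one_sub_mul_tsum_pow (hr₀ : 0 ≤ r) (hr₁ : r < 1)
    (hB : ∀ i, ∑ l, |B i l| ≤ r) :
    (1 - B) * ∑' k, B ^ k = 1 :=
  mul_neg_geom_series B ((linfty_opNorm_le_of_sum_abs_le hr₀ hB).trans_lt hr₁)

theorem hasSum_pow_inv_one_sub (hr₀ : 0 ≤ r) (hr₁ : r < 1)
    (hB : ∀ i, ∑ l, |B i l| ≤ r) :
    HasSum (fun k => B ^ k) (1 - B)⁻¹ := by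
  rw [inv_eq_right_inv (one_sub_mul_tsum_pow hr₀ hr₁ hB)]
  exact (summable_geometric_of_norm_lt_one
    ((linfty_opNorm_le_of_sum_abs_le hr₀ hB).trans_lt hr₁)).hasSum

end LinftyOpNorm

theorem abs_inv_one_sub_apply_le {m : ℕ} {B : Matrix (Fin m) (Fin m) ℝ} {r : ℝ} (hr : r < 1)
    (hB : ∀ i, ∑ l, |B i l| ≤ r) (hadj : ∀ i l, B i l ≠ 0 → ((i : ℤ) - l).natAbs = 1)
    (i j : Fin m) : |(1 - B)⁻¹ i j| ≤ r ^ ((i : ℤ) - j).natAbs / (1 - r ^ 2) := by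
  have hr₀ : 0 ≤ r := (sum_nonneg fun l _ => abs_nonneg (B i l)).trans (hB i)
  have hentry := Pi.hasSum.1 (Pi.hasSum.1 (hasSum_pow_inv_one_sub hr₀ hr hB) i) j
  rw [← hentry.tsum_eq]
  exact abs_tsum_le_pow_div_one_sub_sq hr₀ hr (abs_pow_apply_le_of_sum_abs_le hB · i j)
    (exists_eq_natAbs_add_two_mul_of_pow_apply_ne_zero hadj · i j)

end Matrix

noncomputable def splineJacobiMatrix (m : ℕ) (lam mu : Fin (m + 1) → ℝ) :
    Matrix (Fin (m + 1)) (Fin (m + 1)) ℝ :=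
  1 - (2⁻¹ : ℝ) • splineMatrix m lam mu

section Spline

variable {m : ℕ} {lam mu : Fin (m + 1) → ℝ}

theorem splineMatrix_eq_smul_one_sub :
    splineMatrix m lam mu = (2 : ℝ) • (1 - splineJacobiMatrix m lam mu) := by
  simp [splineJacobiMatrix, smul_smul]

theorem splineJacobiMatrix_apply (i j : Fin (m + 1)) :
    splineJacobiMatrix m lam mu i j =
      -2⁻¹ * ((if (j : ℕ) = i + 1 then mu i else 0) +
        if (i : ℕ) = j + 1 then lam i else 0) := by
  simp only [splineJacobiMatrix, splineMatrix, Matrix.sub_apply, Matrix.one_apply,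
    Matrix.smul_apply, smul_eq_mul, Fin.ext_iff]
  split_ifs <;> first | omega | ring

theorem natAbs_sub_eq_one_of_splineJacobiMatrix_ne_zero {i j : Fin (m + 1)}
    (h : splineJacobiMatrix m lam mu i j ≠ 0) : ((i : ℤ) - j).natAbs = 1 := by
  rw [splineJacobiMatrix_apply] at h
  split_ifs at h <;> first | omega | simp at h

theorem sum_abs_splineJacobiMatrix_le (hlam : ∀ i, 0 ≤ lam i) (hmu : ∀ i, 0 ≤ mu i)
    (hsum : ∀ i, lam i + mu i = 1) (i : Fin (m + 1)) :
    ∑ l, |splineJacobiMatrix m lam mu i l| ≤ 2⁻¹ := by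
  have hmu_le : ∑ l : Fin (m + 1), (if (l : ℕ) = i + 1 then mu i else 0) ≤ mu i :=
    sum_ite_le_of_subsingleton (fun a ha b hb => by ext; exact ha.trans hb.symm) (hmu i)
  have hlam_le : ∑ l : Fin (m + 1), (if (i : ℕ) = l + 1 then lam i else 0) ≤ lam i :=
    sum_ite_le_of_subsingleton (fun a ha b hb => by ext; simp_all) (hlam i)
  simp_rw [splineJacobiMatrix_apply, abs_mul, abs_neg, abs_of_nonneg (add_nonneg
    (ite_nonneg (hmu i) le_rfl) (ite_nonneg (hlam i) le_rfl)), ← mul_sum, sum_add_distrib]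
  linarith [hsum i]

end Spline

/-- Kershaw's bound: the tridiagonal spline matrix is invertible and the
entries of its inverse decay geometrically away from the diagonal:
`|(A⁻¹)ᵢⱼ| ≤ (2/3)·2^{−|i−j|}`. -/
theorem splineMatrix_inv_entry_bound (m : ℕ) (lam mu : Fin (m + 1) → ℝ)
    (hlam : ∀ i, 0 ≤ lam i ∧ lam i ≤ 1) (hmu : ∀ i, 0 ≤ mu i ∧ mu i ≤ 1)
    (hsum : ∀ i, lam i + mu i = 1) :
    IsUnit (splineMatrix m lam mu) ∧
    ∀ i j : Fin (m + 1),
      |(splineMatrix m lam mu)⁻¹ i j| ≤ 2 / 3 * (1 / 2 : ℝ) ^ (((i : ℤ) - (j : ℤ)).natAbs) := by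
  have hJ := sum_abs_splineJacobiMatrix_le (fun i => (hlam i).1) (fun i => (hmu i).1) hsum
  have hdet : IsUnit (1 - splineJacobiMatrix m lam mu).det := Matrix.isUnit_det_of_right_inverse
    (Matrix.one_sub_mul_tsum_pow (by norm_num) (by norm_num) hJ)
  rw [splineMatrix_eq_smul_one_sub, Matrix.isUnit_iff_isUnit_det, Matrix.det_smul]
  refine ⟨(IsUnit.pow _ (by norm_num)).mul hdet, fun i j => ?_⟩
  rw [Matrix.inv_smul _ _ hdet, Matrix.smul_apply, smul_eq_mul, invOf_eq_inv, abs_mul]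
  calc |(2⁻¹ : ℝ)| * |(1 - splineJacobiMatrix m lam mu)⁻¹ i j|
      ≤ 2⁻¹ * ((2⁻¹ : ℝ) ^ ((i : ℤ) - j).natAbs / (1 - (2⁻¹ : ℝ) ^ 2)) := by
        rw [abs_of_pos (by norm_num)]
        gcongr
        exact Matrix.abs_inv_one_sub_apply_le (by norm_num) hJ
          (fun _ _ => natAbs_sub_eq_one_of_splineJacobiMatrix_ne_zero) i j
    _ = 2 / 3 * (1 / 2 : ℝ) ^ ((i : ℤ) - j).natAbs := by norm_num; ring
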